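/- Let a, b, c, d ∈ ℂ with a·d − b·c = 1 and γ(w) = (a·w+b)/(c·w+d). Let f : ℂ → ℂ be analytic at z with f''(z) ≠ 0 and c·f(z)+d ≠ 0, and let g = γ ∘ f (analytic near z). If moreover g''(z) ≠ 0 and c·(D f)(z) + d ≠ 0, where D f (z) = f(z) − 2·f'(z)²/f''(z), then D g (z) = (a·(D f)(z) + b)/(c·(D f)(z) + d). -/

import Mathlib

/-!
With `a * d - b * c = 1`, differentiating `g = γ ∘ f` gives `g' = f' / (c f + d)²` and
`g'' = (f'' (c f + d) - 2 c f'²) / (c f + d)³`; substituting these, the claimed identity becomes an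
identity of rational functions in `f z`, `f' z`, `f'' z`.
-/

open Filter Topology

noncomputable def equivariantDeriv {𝕜 : Type*} [NontriviallyNormedField 𝕜] (f : 𝕜 → 𝕜) (z : 𝕜) : 𝕜 :=
  f z - 2 * deriv f z ^ 2 / deriv (deriv f) z

section Field

variable {K : Type*} [Field K]

theorem moebius_sub_two_mul_sq_div_eq {a b c d : K} (hdet : a * d - b * c = 1) {u p q : K}
    (hq : q ≠ 0) (hu : c * u + d ≠ 0) (hv : c * (u - 2 * p ^ 2 / q) + d ≠ 0) :
    (a * u + b) / (c * u + d)
        - 2 * (p / (c * u + d) ^ 2) ^ 2 / ((q * (c * u + d) - 2 * c * p ^ 2) / (c * u + d) ^ 3)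
      = (a * (u - 2 * p ^ 2 / q) + b) / (c * (u - 2 * p ^ 2 / q) + d) := by
  have hE : q * (c * u + d) - 2 * c * p ^ 2 ≠ 0 := by
    contrapose! hv
    field_simp
    linear_combination hv
  have hv' : c * (u - 2 * p ^ 2 / q) + d = (q * (c * u + d) - 2 * c * p ^ 2) / q := by
    field_simp; ring
  have hw' : a * (u - 2 * p ^ 2 / q) + b = (a * (q * u - 2 * p ^ 2) + b * q) / q := by
    field_simp
  rw [hv', hw', div_div_div_cancel_right₀ hq]
  have hsecond : 2 * (p / (c * u + d) ^ 2) ^ 2 / ((q * (c * u + d) - 2 * c * p ^ 2) / (c * u + d) ^ 3)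
      = 2 * p ^ 2 / ((c * u + d) * (q * (c * u + d) - 2 * c * p ^ 2)) := by
    field_simp
  rw [hsecond, div_sub_div _ _ hu (mul_ne_zero hu hE),
    div_eq_div_iff (mul_ne_zero hu (mul_ne_zero hu hE)) hE]
  linear_combination (2 * p ^ 2 * (c * u + d) * (q * (c * u + d) - 2 * c * p ^ 2)) * hdet

end Field

section Moebius

variable {𝕜 : Type*} [NontriviallyNormedField 𝕜] {a b c d : 𝕜} {f : 𝕜 → 𝕜} {z : 𝕜}

theorem HasDerivAt.moebius_comp (hdet : a * d - b * c = 1) {f' : 𝕜} (hf : HasDerivAt f f' z)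
    (hz : c * f z + d ≠ 0) :
    HasDerivAt (fun w => (a * f w + b) / (c * f w + d)) (f' / (c * f z + d) ^ 2) z := by
  have h := ((hf.const_mul a).add_const b).fun_div ((hf.const_mul c).add_const d) hz
  rwa [show a * f' * (c * f z + d) - (a * f z + b) * (c * f') = f' by
    linear_combination f' * hdet] at h

theorem deriv_moebius_comp_eventuallyEq (hdet : a * d - b * c = 1)
    (hf : ∀ᶠ w in 𝓝 z, DifferentiableAt 𝕜 f w) (hz : c * f z + d ≠ 0) :
    deriv (fun w => (a * f w + b) / (c * f w + d)) =ᶠ[𝓝 z]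
      fun w => deriv f w / (c * f w + d) ^ 2 := by
  have hne : ∀ᶠ w in 𝓝 z, c * f w + d ≠ 0 :=
    (hf.self_of_nhds.continuousAt.const_mul c |>.add_const d).eventually_ne hz
  filter_upwards [hf, hne] with w hfw hw
  exact (hfw.hasDerivAt.moebius_comp hdet hw).deriv

theorem deriv_deriv_moebius_comp (hdet : a * d - b * c = 1)
    (hf : ∀ᶠ w in 𝓝 z, DifferentiableAt 𝕜 f w) (hf' : DifferentiableAt 𝕜 (deriv f) z)
    (hz : c * f z + d ≠ 0) :
    deriv (deriv fun w => (a * f w + b) / (c * f w + d)) z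
      = (deriv (deriv f) z * (c * f z + d) - 2 * c * deriv f z ^ 2) / (c * f z + d) ^ 3 := by
  have hD : HasDerivAt (fun w => (c * f w + d) ^ 2) (2 * (c * f z + d) * (c * deriv f z)) z := by
    simpa using ((hf.self_of_nhds.hasDerivAt.const_mul c).add_const d).fun_pow 2
  rw [(deriv_moebius_comp_eventuallyEq hdet hf hz).deriv_eq,
    (hf'.hasDerivAt.fun_div hD (pow_ne_zero 2 hz)).deriv]
  field_simp

theorem equivariantDeriv_moebius_comp (hdet : a * d - b * c = 1)
    (hf : ∀ᶠ w in 𝓝 z, DifferentiableAt 𝕜 f w) (hf' : DifferentiableAt 𝕜 (deriv f) z)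
    (hf'' : deriv (deriv f) z ≠ 0) (hz : c * f z + d ≠ 0)
    (hD : c * equivariantDeriv f z + d ≠ 0) :
    equivariantDeriv (fun w => (a * f w + b) / (c * f w + d)) z
      = (a * equivariantDeriv f z + b) / (c * equivariantDeriv f z + d) := by
  rw [equivariantDeriv, (deriv_moebius_comp_eventuallyEq hdet hf hz).self_of_nhds,
    deriv_deriv_moebius_comp hdet hf hf' hz]
  exact moebius_sub_two_mul_sq_div_eq hdet hf'' hz hD

end Moebius

theorem equivariant_derivative_equivariance
    (a b c d : ℂ) (hdet : a * d - b * c = 1)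
    (f g : ℂ → ℂ) (z : ℂ)
    (hf : AnalyticAt ℂ f z)
    (hf'' : deriv (deriv f) z ≠ 0)
    (hden : c * f z + d ≠ 0)
    (hg : g = fun w => (a * f w + b) / (c * f w + d))
    (hden2 : c * (f z - 2 * (deriv f z) ^ 2 / deriv (deriv f) z) + d ≠ 0) :
    g z - 2 * (deriv g z) ^ 2 / deriv (deriv g) z
      = (a * (f z - 2 * (deriv f z) ^ 2 / deriv (deriv f) z) + b)
        / (c * (f z - 2 * (deriv f z) ^ 2 / deriv (deriv f) z) + d) := by
  subst hg
  exact equivariantDeriv_moebius_comp hdet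
    (hf.eventually_analyticAt.mono fun _ hw => hw.differentiableAt)
    hf.deriv.differentiableAt hf'' hden hden2
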